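/- arXiv:0801.3097 — 3 statements merged into one kernel-verified Lean document; each statement's English description precedes it below -/
import Mathlib

section
/- Consider the bid-update game where each user i's best response to opponents' bids is B_i(b_{-i}) = f_i·(Σ_{j≠i} b_j + β) with fixed coefficients f_i ∈ [0,∞) and β > 0. A nonnegative fixed point b* (Nash equilibrium) with the induced proportional power allocation satisfying Σ_i P_i* < P_total exists and is unique whenever Σ_i f_i/(f_i+1) < 1; in that case b_i* = (f_i/(f_i+1))·β / (1 − Σ_j f_j/(f_j+1)). -/
/-!
Writing `S = ∑ j, b j`, the fixed-point equation `b i = f i * (S - b i + β)` is linear in `b i`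
and solves to `b i = s i * (S + β)` with `s i = f i / (f i + 1)`. Summing over `i` gives
`S = (∑ s) * (S + β)`, which pins down `S + β = β / (1 - ∑ s)` as long as `∑ s ≠ 1`; hence the
equilibrium is unique and explicit, and conversely that explicit vector is an equilibrium.
The allocated power is `Ptot * S / (S + β) < Ptot` because the reserve bid `β` is positive.
-/

open Finset

namespace LinearBidGame

variable {ι : Type*} [Fintype ι]

def IsEquilibrium [DecidableEq ι] (f : ι → ℝ) (β : ℝ) (b : ι → ℝ) : Prop :=
  ∀ i, b i = f i * (∑ j ∈ univ.erase i, b j + β)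

noncomputable def share (x : ℝ) : ℝ := x / (x + 1)

noncomputable def equilibriumBid (f : ι → ℝ) (β : ℝ) (i : ι) : ℝ :=
  share (f i) * β / (1 - ∑ j, share (f j))

lemma share_nonneg {x : ℝ} (hx : 0 ≤ x) : 0 ≤ share x :=
  div_nonneg hx (by linarith)

lemma eq_mul_sub_iff_eq_share_mul {a x T : ℝ} (ha : a + 1 ≠ 0) :
    x = a * (T - x) ↔ x = share a * T := by
  rw [share, div_mul_eq_mul_div, eq_div_iff ha]
  constructor <;> intro h <;> linear_combination h

lemma isEquilibrium_iff [DecidableEq ι] {f : ι → ℝ} {β : ℝ} {b : ι → ℝ}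
    (hf : ∀ i, f i + 1 ≠ 0) :
    IsEquilibrium f β b ↔ ∀ i, b i = share (f i) * (∑ j, b j + β) := by
  refine forall_congr' fun i => ?_
  rw [sum_erase_eq_sub (mem_univ i), sub_add_eq_add_sub, eq_mul_sub_iff_eq_share_mul (hf i)]

lemma sum_add_eq_div_of_forall_eq_mul {g b : ι → ℝ} {β : ℝ} (hg : ∑ i, g i ≠ 1)
    (hb : ∀ i, b i = g i * (∑ j, b j + β)) :
    ∑ j, b j + β = β / (1 - ∑ i, g i) := by
  have hsum : ∑ j, b j = (∑ i, g i) * (∑ j, b j + β) := by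
    rw [sum_mul]
    exact sum_congr rfl fun i _ => hb i
  rw [eq_div_iff (sub_ne_zero.2 hg.symm)]
  linear_combination hsum

lemma sum_equilibriumBid_add (f : ι → ℝ) (β : ℝ) (hf : ∑ i, share (f i) ≠ 1) :
    ∑ j, equilibriumBid f β j + β = β / (1 - ∑ i, share (f i)) := by
  have hne : 1 - ∑ i, share (f i) ≠ 0 := sub_ne_zero.2 hf.symm
  simp only [equilibriumBid, ← sum_div, ← sum_mul]
  field_simp
  ring

lemma isEquilibrium_iff_eq_equilibriumBid [DecidableEq ι] {f : ι → ℝ} {β : ℝ} {b : ι → ℝ}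
    (hf : ∀ i, f i + 1 ≠ 0) (hshare : ∑ i, share (f i) ≠ 1) :
    IsEquilibrium f β b ↔ b = equilibriumBid f β := by
  rw [isEquilibrium_iff hf]
  constructor
  · intro hb
    funext i
    rw [hb i, sum_add_eq_div_of_forall_eq_mul hshare hb, equilibriumBid, mul_div_assoc]
  · rintro rfl i
    rw [sum_equilibriumBid_add f β hshare, equilibriumBid, mul_div_assoc]

lemma equilibriumBid_nonneg {f : ι → ℝ} {β : ℝ} (hf : ∀ i, 0 ≤ f i) (hβ : 0 ≤ β)
    (hshare : ∑ i, share (f i) < 1) (i : ι) : 0 ≤ equilibriumBid f β i :=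
  div_nonneg (mul_nonneg (share_nonneg (hf i)) hβ) (by linarith)

lemma sum_mul_div_sum_add_lt {b : ι → ℝ} {β P : ℝ} (hb : ∀ i, 0 ≤ b i) (hβ : 0 < β)
    (hP : 0 < P) : ∑ i, b i * P / (∑ j, b j + β) < P := by
  have hS : 0 ≤ ∑ j, b j := sum_nonneg fun j _ => hb j
  rw [← sum_div, ← sum_mul, div_lt_iff₀ (by linarith)]
  linarith [mul_pos hP hβ]

end LinearBidGame

open LinearBidGame in
/-- In the linear best-response bid game B_i(b_{-i}) = f_i·(Σ_{j≠i} b_j + β)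
with f_i ≥ 0 and β > 0, if Σ_i f_i/(f_i+1) < 1 then a nonnegative Nash equilibrium (fixed
point) exists and is unique; it is given by b_i* = (f_i/(f_i+1))·β/(1 − Σ_j f_j/(f_j+1)),
and the induced proportional allocation satisfies Σ_i P_i* < P_total. -/
theorem linear_bid_game_NE_exists_unique
    (I : ℕ) (f : Fin I → ℝ) (β Ptot : ℝ)
    (hf : ∀ i, 0 ≤ f i) (hβ : 0 < β) (hPtot : 0 < Ptot)
    (hsum : (∑ i, f i / (f i + 1)) < 1) :
    (∃! b : Fin I → ℝ, (∀ i, 0 ≤ b i) ∧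
        ∀ i, b i = f i * ((∑ j ∈ Finset.univ.erase i, b j) + β)) ∧
    (∀ b : Fin I → ℝ, ((∀ i, 0 ≤ b i) ∧
        ∀ i, b i = f i * ((∑ j ∈ Finset.univ.erase i, b j) + β)) →
      (∀ i, b i = (f i / (f i + 1)) * β / (1 - ∑ j, f j / (f j + 1))) ∧
      (∑ i, b i * Ptot / ((∑ j, b j) + β)) < Ptot) := by
  have hf1 : ∀ i, f i + 1 ≠ 0 := fun i => by linarith [hf i]
  have hchar (b : Fin I → ℝ) : IsEquilibrium f β b ↔ b = equilibriumBid f β :=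
    isEquilibrium_iff_eq_equilibriumBid hf1 hsum.ne
  refine ⟨⟨equilibriumBid f β, ⟨equilibriumBid_nonneg hf hβ.le hsum, (hchar _).2 rfl⟩,
    fun b hb => (hchar b).1 hb.2⟩,
    fun b hb => ⟨congrFun ((hchar b).1 hb.2), sum_mul_div_sum_add_lt hb.1 hβ hPtot⟩⟩
end

section
/- In the linear best-response game B_i(b_{-i}) = f_i·(Σ_{j≠i} b_j + β) with β > 0 and all f_i > 0, if Σ_i f_i/(f_i+1) ≥ 1 then no finite nonnegative Nash equilibrium exists. -/
/-!
Solving the best-response equation `b i = f i * (S - b i + β)`, with `S = ∑ j, b j`, for `b i`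
gives `b i = f i / (f i + 1) * (S + β)`. Summing over `i` yields `S = c * (S + β)` with
`c = ∑ i, f i / (f i + 1)`, and since `S + β > 0`, the assumption `c ≥ 1` forces `β ≤ 0`.
-/

open Finset

theorem eq_div_add_one_mul_of_eq_mul_sub {K : Type*} [Field K] {x a t : K} (ht : t ≠ 0)
    (h : x = a * (t - x)) : x = a / (a + 1) * t := by
  have hx : x * (a + 1) = a * t := by linear_combination h
  -- `a = -1` would give `0 = -t`.
  have ha : a + 1 ≠ 0 := by
    intro ha
    rw [ha, mul_zero, eq_neg_of_add_eq_zero_left ha, neg_one_mul, zero_eq_neg] at hx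
    exact ht hx
  field_simp
  exact hx

theorem sum_eq_mul_of_eq_mul_sum_erase_add {ι K : Type*} [Fintype ι] [DecidableEq ι] [Field K]
    {f b : ι → K} {β : K} (hT : ∑ j, b j + β ≠ 0)
    (hb : ∀ i, b i = f i * (∑ j ∈ univ.erase i, b j + β)) :
    ∑ i, b i = (∑ i, f i / (f i + 1)) * (∑ i, b i + β) := by
  rw [sum_mul]
  refine sum_congr rfl fun i _ => eq_div_add_one_mul_of_eq_mul_sub hT ?_
  have hbi := hb i
  rw [sum_erase_eq_sub (mem_univ i)] at hbi
  linear_combination hbi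

theorem linear_bid_game_no_NE_general
    (I : ℕ) (f : Fin I → ℝ) (β : ℝ)
    (hβ : 0 < β)
    (hsum : 1 ≤ ∑ i, f i / (f i + 1)) :
    ¬ ∃ b : Fin I → ℝ, (∀ i, 0 ≤ b i) ∧
        ∀ i, b i = f i * ((∑ j ∈ Finset.univ.erase i, b j) + β) := by
  rintro ⟨b, hb_nonneg, hb⟩
  have hT : 0 < ∑ j, b j + β := add_pos_of_nonneg_of_pos (sum_nonneg fun j _ => hb_nonneg j) hβ
  have hS := sum_eq_mul_of_eq_mul_sum_erase_add hT.ne' hb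
  have hle := mul_le_mul_of_nonneg_right hsum hT.le
  linarith

/-- In the linear best-response game with all f_i > 0 and β > 0, if
Σ_i f_i/(f_i+1) ≥ 1 then no finite nonnegative Nash equilibrium (fixed point of the joint
best-response map) exists. -/
theorem linear_bid_game_no_NE
    (I : ℕ) (f : Fin I → ℝ) (β : ℝ)
    (hf : ∀ i, 0 < f i) (hβ : 0 < β)
    (hsum : 1 ≤ ∑ i, f i / (f i + 1)) :
    ¬ ∃ b : Fin I → ℝ, (∀ i, 0 ≤ b i) ∧
        ∀ i, b i = f i * ((∑ j ∈ Finset.univ.erase i, b j) + β) :=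
  linear_bid_game_no_NE_general I f β hβ hsum
end

section
/- Any allocation solving the fairness problem (maximize total relay power used subject to equalized weighted marginal rate increases among active users) is Pareto optimal: there is no other feasible power allocation giving every user a rate increase at least as large and some user a strictly larger rate increase. -/
open Set

/-- Positivity of the derivative of a strictly monotone concave differentiable function
at an interior point of `Ici 0`. -/
lemma deriv_pos_of_strictMonoOn_concave {f : ℝ → ℝ}
    (hmono : StrictMonoOn f (Ici 0)) (hconc : StrictConcaveOn ℝ (Ici 0) f)
    (hdiff : DifferentiableOn ℝ f (Ici 0)) {x : ℝ} (hx : 0 < x) :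
    0 < deriv f x := by
  have hxm : x ∈ Ici (0:ℝ) := le_of_lt hx
  have hx1 : x + 1 ∈ Ici (0:ℝ) := by simp [le_of_lt hx]; linarith
  have hda : DifferentiableAt ℝ f x :=
    (hdiff x hxm).differentiableAt (Ici_mem_nhds hx)
  have hslope : slope f x (x + 1) ≤ deriv f x :=
    hconc.concaveOn.slope_le_deriv hxm hx1 (by linarith) hda
  have hlt : f x < f (x + 1) := hmono hxm hx1 (by linarith)
  have : 0 < slope f x (x + 1) := by
    rw [slope_def_field]
    have : x + 1 - x = 1 := by ring
    rw [div_pos_iff]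
    left
    constructor <;> [linarith; linarith]
  linarith

/-- Any allocation solving the fairness problem (maximizing the total relay
power used subject to equalized weighted marginal rate increases c·q_i among the active
users) is Pareto optimal with respect to the users' rate increases: no feasible allocation
gives every user at least as large a rate increase and some user a strictly larger one. -/
theorem fair_allocation_pareto_optimal
    (I : ℕ) (R : Fin I → ℝ → ℝ) (q : Fin I → ℝ) (Ptot : ℝ)
    (hPtot : 0 < Ptot) (hq : ∀ i, 0 < q i)
    (hmono : ∀ i, StrictMonoOn (R i) (Ici 0))
    (hconc : ∀ i, StrictConcaveOn ℝ (Ici 0) (R i))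
    (hdiff : ∀ i, DifferentiableOn ℝ (R i) (Ici 0))
    (P : Fin I → ℝ)
    (hfeas : (∀ i, 0 ≤ P i) ∧ (∑ i, P i) ≤ Ptot)
    (hfair : ∃ c > (0:ℝ), ∀ i, 0 < P i → deriv (R i) (P i) = c * q i)
    (hmax : ∀ Q : Fin I → ℝ,
      ((∀ i, 0 ≤ Q i) ∧ (∑ i, Q i) ≤ Ptot ∧
        ∃ c > (0:ℝ), ∀ i, 0 < Q i → deriv (R i) (Q i) = c * q i) →
      (∑ i, Q i) ≤ ∑ i, P i) :
    ¬ ∃ Q : Fin I → ℝ, (∀ i, 0 ≤ Q i) ∧ (∑ i, Q i) ≤ Ptot ∧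
        (∀ i, R i (P i) ≤ R i (Q i)) ∧ (∃ i, R i (P i) < R i (Q i)) := by
  rintro ⟨Q, hQ0, hQtot, hle, j, hj⟩
  obtain ⟨hP0, hPsum⟩ := hfeas
  -- From strict monotonicity, the rate comparisons give power comparisons.
  have hPQ : ∀ i, P i ≤ Q i := by
    intro i
    by_contra h
    push_neg at h
    exact absurd (hle i) (not_le.mpr (hmono i (hQ0 i) (hP0 i) h))
  have hPQj : P j < Q j := by
    by_contra h
    push_neg at h
    rcases eq_or_lt_of_le h with h' | h'
    · rw [h'] at hj; exact lt_irrefl _ hj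
    · exact absurd (le_of_lt hj) (not_le.mpr (hmono j (hQ0 j) (hP0 j) h'))
  -- Hence ∑ P < ∑ Q ≤ Ptot.
  have hsum : ∑ i, P i < ∑ i, Q i :=
    Finset.sum_lt_sum (fun i _ => hPQ i) ⟨j, Finset.mem_univ j, hPQj⟩
  have hPlt : ∑ i, P i < Ptot := lt_of_lt_of_le hsum hQtot
  have hP0sum : (0:ℝ) ≤ ∑ i, P i := Finset.sum_nonneg fun i _ => hP0 i
  -- Consider the allocation giving m := (∑ P + Ptot)/2 to user j and 0 to the others.
  set m : ℝ := (∑ i, P i + Ptot) / 2 with hm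
  have hm0 : 0 < m := by positivity
  have hmlt : ∑ i, P i < m := by simp only [hm]; linarith
  have hmle : m ≤ Ptot := by simp only [hm]; linarith
  set Q' : Fin I → ℝ := fun i => if i = j then m else 0 with hQ'
  have hsumQ' : ∑ i, Q' i = m := by
    simp [hQ', Finset.sum_ite_eq']
  have hderivpos : 0 < deriv (R j) m :=
    deriv_pos_of_strictMonoOn_concave (hmono j) (hconc j) (hdiff j) hm0
  have : ∑ i, Q' i ≤ ∑ i, P i := by
    apply hmax
    refine ⟨fun i => ?_, by rw [hsumQ']; exact hmle,
      deriv (R j) m / q j, div_pos hderivpos (hq j), fun i hi => ?_⟩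
    · by_cases h : i = j <;> simp [hQ', h, le_of_lt hm0]
    · have hij : i = j := by
        by_contra h
        simp [hQ', h] at hi
      subst hij
      simp only [hQ', if_pos rfl]
      rw [div_mul_eq_mul_div, mul_div_assoc, div_self (hq _).ne', mul_one]
  rw [hsumQ'] at this
  linarith
end
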